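/- Let k be a field and φ : k[x₁, x₂, x₃, x₄] → k[t] the map with x₁ ↦ t^8, x₂ ↦ t^{12}, x₃ ↦ t^{14}, x₄ ↦ t^{21}. Then ker φ = (x₄² − x₃³, x₃² − x₁²x₂, x₂² − x₁³). -/

import Mathlib

/-!
The monomial map sends `x^v` to `t^(weight v)`, so its kernel contains the three binomials and
kills a polynomial exactly when, in each degree, the coefficients of the monomials of that weight
sum to zero. The rewriting rules `x₄² → x₃³`, `x₃² → x₁²x₂`, `x₂² → x₁³` bring every monomial,
modulo the binomials, to one with `x₂, x₃, x₄` exponents at most `1`. Such a monomial has weight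
`8a + {0, 12, 14, 21, 26, 33, 35, 47}`, and these eight offsets are distinct modulo `8`, so its weight
determines it. Hence a polynomial in the kernel reduces to a combination of such monomials with
zero image, which must vanish.
-/

open MvPolynomial

namespace MvPolynomial

variable {R σ : Type*} [CommRing R]

theorem aeval_X_pow_monomial (w : σ → ℕ) (v : σ →₀ ℕ) (c : R) :
    aeval (fun i => (Polynomial.X : Polynomial R) ^ w i) (monomial v c) =
      Polynomial.C c * Polynomial.X ^ Finsupp.weight w v := by
  rw [aeval_monomial, Polynomial.algebraMap_eq, Finsupp.weight_apply, Finsupp.prod, Finsupp.sum,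
    ← Finset.prod_pow_eq_pow_sum]
  simp only [smul_eq_mul, pow_mul']

theorem coeff_aeval_X_pow (w : σ → ℕ) (p : MvPolynomial σ R) (n : ℕ) :
    (aeval (fun i => (Polynomial.X : Polynomial R) ^ w i) p).coeff n =
      ∑ v ∈ p.support with Finsupp.weight w v = n, coeff v p := by
  conv_lhs => rw [p.as_sum]
  simp only [map_sum, aeval_X_pow_monomial, Polynomial.finsetSum_coeff,
    Polynomial.coeff_C_mul_X_pow, Finset.sum_filter, eq_comm]

theorem eq_zero_of_aeval_X_pow_eq_zero {w : σ → ℕ} {S : Set (σ →₀ ℕ)}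
    (hS : S.InjOn (Finsupp.weight w)) {r : MvPolynomial σ R} (hr : r ∈ restrictSupport R S)
    (h : aeval (fun i => (Polynomial.X : Polynomial R) ^ w i) r = 0) : r = 0 := by
  ext s
  rw [coeff_zero]
  by_contra hs
  have hsS : s ∈ S := hr (mem_support_iff.2 hs)
  have hcoeff : ∑ v ∈ r.support with Finsupp.weight w v = Finsupp.weight w s, coeff v r =
      coeff s r :=
    Finset.sum_eq_single_of_mem s (by simp [hs]) fun v hv hvs =>
      (hvs (hS (hr (Finset.mem_filter.1 hv).1) hsS (Finset.mem_filter.1 hv).2)).elim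
  rw [← coeff_aeval_X_pow, h, Polynomial.coeff_zero] at hcoeff
  exact hs hcoeff.symm

theorem monomial_sub_monomial_mem_of_le {I : Ideal (MvPolynomial σ R)} {s t v : σ →₀ ℕ}
    (h : monomial s 1 - monomial t 1 ∈ I) (hsv : s ≤ v) :
    monomial v 1 - monomial (v - s + t) 1 ∈ I := by
  have hfactor : monomial v (1 : R) - monomial (v - s + t) 1 =
      monomial (v - s) 1 * (monomial s 1 - monomial t 1) := by
    rw [mul_sub, monomial_mul, monomial_mul, one_mul, tsub_add_cancel_of_le hsv]
  rw [hfactor]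
  exact I.mul_mem_left _ h

theorem exists_mem_monomial_sub_monomial_mem {I : Ideal (MvPolynomial σ R)}
    {S : Set (σ →₀ ℕ)} (μ : (σ →₀ ℕ) → ℕ)
    (hstep : ∀ v ∉ S, ∃ v', μ v' < μ v ∧ monomial v 1 - monomial v' 1 ∈ I) (v : σ →₀ ℕ) :
    ∃ u ∈ S, monomial v 1 - monomial u 1 ∈ I := by
  by_cases hv : v ∈ S
  · exact ⟨v, hv, by simp⟩
  obtain ⟨v', hlt, hvv'⟩ := hstep v hv
  obtain ⟨u, hu, hv'u⟩ := exists_mem_monomial_sub_monomial_mem μ hstep v'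
  exact ⟨u, hu, by simpa using add_mem hvv' hv'u⟩
termination_by μ v

theorem ker_aeval_X_pow_eq {w : σ → ℕ} {S : Set (σ →₀ ℕ)} {I : Ideal (MvPolynomial σ R)}
    (hI : I ≤ RingHom.ker (aeval fun i => (Polynomial.X : Polynomial R) ^ w i))
    (hS : S.InjOn (Finsupp.weight w))
    (hred : ∀ v, ∃ u ∈ S, monomial v 1 - monomial u 1 ∈ I) :
    RingHom.ker (aeval fun i => (Polynomial.X : Polynomial R) ^ w i) = I := by
  refine le_antisymm (fun p hp => ?_) hI
  choose u huS huI using hred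
  set r := ∑ v ∈ p.support, monomial (u v) (coeff v p)
  have hpr : p - r ∈ I := by
    have hsum : p - r = ∑ v ∈ p.support, C (coeff v p) * (monomial v 1 - monomial (u v) 1) := by
      simp only [r, mul_sub, C_mul_monomial, mul_one, Finset.sum_sub_distrib, ← p.as_sum]
    rw [hsum]
    exact Ideal.sum_mem _ fun v _ => I.mul_mem_left _ (huI v)
  have hr : r = 0 :=
    eq_zero_of_aeval_X_pow_eq_zero hS
      (Submodule.sum_mem _ fun v _ => (monomial_mem_restrictSupport R).2 (.inl (huS v)))
      (RingHom.mem_ker.1 (by simpa using sub_mem hp (hI hpr)))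
  simpa [hr] using hpr

end MvPolynomial

section NumericalSemigroup

variable (R : Type*) [CommRing R]

noncomputable def binomialIdeal : Ideal (MvPolynomial (Fin 4) R) :=
  Ideal.span {X 3 ^ 2 - X 2 ^ 3, X 2 ^ 2 - X 0 ^ 2 * X 1, X 1 ^ 2 - X 0 ^ 3}

def reducedExponents : Set (Fin 4 →₀ ℕ) := {v | v 1 ≤ 1 ∧ v 2 ≤ 1 ∧ v 3 ≤ 1}

theorem binomialIdeal_le_ker :
    binomialIdeal R ≤
      RingHom.ker (aeval fun i => (Polynomial.X : Polynomial R) ^ (![8, 12, 14, 21] i)) := by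
  rw [binomialIdeal, Ideal.span_le]
  rintro g (rfl | rfl | rfl) <;> simp [← pow_mul, ← pow_add]

theorem injOn_weight_reducedExponents :
    reducedExponents.InjOn (Finsupp.weight (![8, 12, 14, 21] : Fin 4 → ℕ)) := by
  rintro v ⟨hv1, hv2, hv3⟩ u ⟨hu1, hu2, hu3⟩ h
  simp only [Finsupp.weight_eq_sum, Fin.sum_univ_four, smul_eq_mul, Matrix.cons_val] at h
  ext i
  match i with
  | 0 | 1 | 2 | 3 => omega

theorem exists_reducedExponents_monomial_sub_monomial_mem (v : Fin 4 →₀ ℕ) :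
    ∃ u ∈ reducedExponents, monomial v 1 - monomial u 1 ∈ binomialIdeal R := by
  refine exists_mem_monomial_sub_monomial_mem (fun x => x 1 + x 2 + 2 * x 3) (fun x hx => ?_) v
  simp only [reducedExponents, Set.mem_ofPred_eq, not_and_or, not_le] at hx
  rcases hx with h1 | h2 | h3
  · refine ⟨x - .single 1 2 + .single 0 3, ?_,
      monomial_sub_monomial_mem_of_le ?_ (Finsupp.single_le_iff.2 h1)⟩
    · simp only [Finsupp.add_apply, Finsupp.tsub_apply, Finsupp.single_apply, Fin.reduceEq,
        ↓reduceIte]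
      omega
    · rw [← X_pow_eq_monomial, ← X_pow_eq_monomial]
      exact Ideal.subset_span (by simp)
  · refine ⟨x - .single 2 2 + (.single 0 2 + .single 1 1), ?_,
      monomial_sub_monomial_mem_of_le ?_ (Finsupp.single_le_iff.2 h2)⟩
    · simp only [Finsupp.add_apply, Finsupp.tsub_apply, Finsupp.single_apply, Fin.reduceEq,
        ↓reduceIte]
      omega
    · rw [monomial_add_single, ← X_pow_eq_monomial, ← X_pow_eq_monomial, pow_one]
      exact Ideal.subset_span (by simp)
  · refine ⟨x - .single 3 2 + .single 2 3, ?_,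
      monomial_sub_monomial_mem_of_le ?_ (Finsupp.single_le_iff.2 h3)⟩
    · simp only [Finsupp.add_apply, Finsupp.tsub_apply, Finsupp.single_apply, Fin.reduceEq,
        ↓reduceIte]
      omega
    · rw [← X_pow_eq_monomial, ← X_pow_eq_monomial]
      exact Ideal.subset_span (by simp)

end NumericalSemigroup

theorem stmt_16 (k : Type*) [Field k] :
    RingHom.ker (MvPolynomial.aeval
        (fun i : Fin 4 => (Polynomial.X : Polynomial k) ^ (![8, 12, 14, 21] i)) :
      MvPolynomial (Fin 4) k →ₐ[k] Polynomial k) =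
    Ideal.span {X 3 ^ 2 - X 2 ^ 3, X 2 ^ 2 - X 0 ^ 2 * X 1, X 1 ^ 2 - X 0 ^ 3} :=
  ker_aeval_X_pow_eq (binomialIdeal_le_ker k) injOn_weight_reducedExponents
    (exists_reducedExponents_monomial_sub_monomial_mem k)
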